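/- Let d : ℕ, t > 0, and p ∈ MvPolynomial (Fin d) ℝ. Then the algebraically defined heat operator agrees with Gaussian convolution: for every x : Fin d → ℝ, ∫ MvPolynomial.eval (x + y) p dγ_t^d(y) = MvPolynomial.eval x (e^{tΔ/2} p). -/

import Mathlib

open MeasureTheory ProbabilityTheory MvPolynomial

/-- The product Gaussian measure `γ_r^d` of variance `r` on `Fin d → ℝ`. -/
noncomputable def gaussianPi (d : ℕ) (r : ℝ) : Measure (Fin d → ℝ) :=
  Measure.pi (fun _ : Fin d => gaussianReal 0 r.toNNReal)

/-- The Laplacian `Δ p = ∑ i, ∂²p/∂x_i²` on polynomials in `d` variables. -/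
noncomputable def mvLaplacian {d : ℕ} (p : MvPolynomial (Fin d) ℝ) :
    MvPolynomial (Fin d) ℝ :=
  ∑ i : Fin d, pderiv i (pderiv i p)

/-- The heat operator `e^{tΔ/2} p = ∑_{k ≤ totalDegree p} ((t/2)^k / k!) • Δ^k p`
(a terminating series, since `Δ` is locally nilpotent). -/
noncomputable def heatOp {d : ℕ} (t : ℝ) (p : MvPolynomial (Fin d) ℝ) :
    MvPolynomial (Fin d) ℝ :=
  ∑ k ∈ Finset.range (p.totalDegree + 1),
    ((t / 2) ^ k / (k.factorial : ℝ)) • (mvLaplacian (d := d))^[k] p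

/-!
Both sides are linear in `p`, so it suffices to compare them on monomials `x^m`, where both obey
the recursion `F (m + eᵢ) = xᵢ F m + t mᵢ F (m - eᵢ)` with `F 0 = 1`, which determines `F`
(the truncated `m - eᵢ` is harmless: its coefficient `mᵢ` vanishes whenever it truncates).
For the heat operator this is the commutation rule `e^{tΔ/2} Xᵢ = (Xᵢ + t ∂ᵢ) e^{tΔ/2}`,
a consequence of `[Δ, Xᵢ] = 2 ∂ᵢ`. For the Gaussian the integral of a monomial factorises over
the coordinates, and the recursion is Stein's identity `∫ s q(s) dγₜ = t ∫ q'(s) dγₜ`,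
i.e. integration by parts against the Gaussian density.
-/

open scoped NNReal

namespace MvPolynomial

section pderiv

variable {σ R : Type*} [CommSemiring R]

theorem pderiv_pderiv_comm (i j : σ) (p : MvPolynomial σ R) :
    pderiv i (pderiv j p) = pderiv j (pderiv i p) := by
  classical
  rcases eq_or_ne i j with rfl | hij
  · rfl
  ext m
  simp only [coeff_pderiv, Finsupp.add_apply, Finsupp.single_apply, if_neg hij,
    if_neg hij.symm, add_zero, add_right_comm m]
  ring

theorem totalDegree_pderiv_le (i : σ) (p : MvPolynomial σ R) :
    (pderiv i p).totalDegree ≤ p.totalDegree - 1 := by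
  refine Finset.sup_le fun m hm => ?_
  rw [mem_support_iff, coeff_pderiv] at hm
  have hdeg := le_totalDegree (mem_support_iff.2 (left_ne_zero_of_mul hm))
  rw [Finsupp.sum_add_index' (fun _ => rfl) (fun _ _ _ => rfl), Finsupp.sum_single_index rfl]
    at hdeg
  omega

theorem pderiv_eq_zero_of_totalDegree_eq_zero (i : σ) {p : MvPolynomial σ R}
    (hp : p.totalDegree = 0) : pderiv i p = 0 := by
  rw [totalDegree_eq_zero_iff_eq_C.1 hp, pderiv_C]

end pderiv

section laplacian

variable (σ R : Type*) [Fintype σ] [CommSemiring R]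

noncomputable def laplacian : Module.End R (MvPolynomial σ R) :=
  ∑ i, (pderiv i).toLinearMap * (pderiv i).toLinearMap

variable {σ R}

theorem laplacian_apply (p : MvPolynomial σ R) :
    laplacian σ R p = ∑ i, pderiv i (pderiv i p) := by
  simp [laplacian, LinearMap.sum_apply]

theorem commute_pderiv_laplacian (i : σ) :
    Commute (pderiv i).toLinearMap (laplacian σ R) := by
  refine LinearMap.ext fun p => ?_
  simp only [Module.End.mul_apply, laplacian_apply, Derivation.coeFn_coe, map_sum,
    pderiv_pderiv_comm i]

theorem totalDegree_laplacian_le (p : MvPolynomial σ R) :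
    (laplacian σ R p).totalDegree ≤ p.totalDegree - 2 := by
  rw [laplacian_apply]
  refine (totalDegree_finsetSum _ _).trans (Finset.sup_le fun i _ => ?_)
  have := totalDegree_pderiv_le i (pderiv i p)
  have := totalDegree_pderiv_le i p
  omega

theorem laplacian_pow_apply_eq_zero {k : ℕ} {p : MvPolynomial σ R} (hp : p.totalDegree < k) :
    (laplacian σ R ^ k) p = 0 := by
  induction k generalizing p with
  | zero => omega
  | succ k ih =>
    rw [pow_succ, Module.End.mul_apply]
    rcases Nat.eq_zero_or_pos p.totalDegree with h0 | hpos
    · rw [laplacian_apply, Finset.sum_eq_zero fun i _ => by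
        rw [pderiv_eq_zero_of_totalDegree_eq_zero i h0, map_zero], map_zero]
    · exact ih ((totalDegree_laplacian_le p).trans_lt (by omega))

theorem laplacian_X_mul (i : σ) (p : MvPolynomial σ R) :
    laplacian σ R (X i * p) = X i * laplacian σ R p + 2 • pderiv i p := by
  classical
  have hterm : ∀ j, pderiv j (pderiv j (X i * p)) =
      X i * pderiv j (pderiv j p) + if j = i then 2 • pderiv i p else 0 := by
    intro j
    rcases eq_or_ne j i with rfl | hj
    · simp only [pderiv_mul, pderiv_X_self, pderiv_one, map_add, if_true]; ring
    · simp [pderiv_X_of_ne hj.symm, hj]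
  simp only [laplacian_apply, hterm, Finset.sum_add_distrib, Finset.mul_sum, Finset.sum_ite_eq',
    Finset.mem_univ, if_true]

theorem laplacian_pow_succ_X_mul (i : σ) (k : ℕ) (p : MvPolynomial σ R) :
    (laplacian σ R ^ (k + 1)) (X i * p) =
      X i * (laplacian σ R ^ (k + 1)) p + (2 * (k + 1)) • (laplacian σ R ^ k) (pderiv i p) := by
  induction k with
  | zero => simpa using laplacian_X_mul i p
  | succ k ih =>
    have hcomm :
        pderiv i ((laplacian σ R ^ (k + 1)) p) = (laplacian σ R ^ (k + 1)) (pderiv i p) :=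
      LinearMap.congr_fun ((commute_pderiv_laplacian i).pow_right (k + 1)).eq p
    rw [pow_succ', Module.End.mul_apply, ih, map_add, laplacian_X_mul, map_nsmul, hcomm,
      ← Module.End.mul_apply, ← pow_succ', ← Module.End.mul_apply, ← pow_succ', add_assoc,
      ← add_nsmul]
    ring_nf

end laplacian

section heat

variable (σ : Type*) [Fintype σ]

noncomputable def heatPartialSum (t : ℝ) (N : ℕ) : Module.End ℝ (MvPolynomial σ ℝ) :=
  ∑ k ∈ Finset.range N, ((t / 2) ^ k / k.factorial) • laplacian σ ℝ ^ k

variable {σ}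

theorem heatPartialSum_apply (t : ℝ) (N : ℕ) (p : MvPolynomial σ ℝ) :
    heatPartialSum σ t N p =
      ∑ k ∈ Finset.range N, ((t / 2) ^ k / k.factorial) • (laplacian σ ℝ ^ k) p := by
  simp [heatPartialSum, LinearMap.sum_apply]

theorem heatPartialSum_apply_eq_of_totalDegree_lt (t : ℝ) {N : ℕ} {p : MvPolynomial σ ℝ}
    (hN : p.totalDegree < N) :
    heatPartialSum σ t N p = heatPartialSum σ t (p.totalDegree + 1) p := by
  simp only [heatPartialSum_apply]
  refine (Finset.sum_subset (Finset.range_subset_range.2 hN) fun k _ hk => ?_).symm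
  rw [laplacian_pow_apply_eq_zero (by simpa using hk), smul_zero]

theorem heatPartialSum_succ_X_mul (t : ℝ) (N : ℕ) (i : σ) (p : MvPolynomial σ ℝ) :
    heatPartialSum σ t (N + 1) (X i * p) =
      X i * heatPartialSum σ t (N + 1) p + t • heatPartialSum σ t N (pderiv i p) := by
  have hcoeff : ∀ k : ℕ, (t / 2) ^ (k + 1) / (k + 1).factorial * (2 * (k + 1) : ℕ) =
      t * ((t / 2) ^ k / k.factorial) := by
    intro k
    rw [Nat.factorial_succ]
    push_cast
    field_simp
    ring
  have hterm : ∀ k : ℕ, ((t / 2) ^ (k + 1) / (k + 1).factorial) •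
      (laplacian σ ℝ ^ (k + 1)) (X i * p) =
        X i * (((t / 2) ^ (k + 1) / (k + 1).factorial) • (laplacian σ ℝ ^ (k + 1)) p) +
          t • (((t / 2) ^ k / k.factorial) • (laplacian σ ℝ ^ k) (pderiv i p)) := by
    intro k
    rw [laplacian_pow_succ_X_mul, smul_add, mul_smul_comm, ← Nat.cast_smul_eq_nsmul ℝ,
      smul_smul, smul_smul, hcoeff]
  simp only [heatPartialSum_apply, Finset.sum_range_succ' _ N, hterm, Finset.sum_add_distrib,
    ← Finset.mul_sum, ← Finset.smul_sum, pow_zero, Nat.factorial_zero, Nat.cast_one, div_one,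
    one_smul, mul_add, Module.End.one_apply]
  abel

end heat

end MvPolynomial

open MvPolynomial

section heatOp

variable {d : ℕ}

theorem heatOp_eq_heatPartialSum (t : ℝ) {N : ℕ} {p : MvPolynomial (Fin d) ℝ}
    (hN : p.totalDegree < N) : heatOp t p = heatPartialSum (Fin d) t N p := by
  have hΔ : mvLaplacian = ⇑(laplacian (Fin d) ℝ) := funext fun p => (laplacian_apply p).symm
  rw [heatPartialSum_apply_eq_of_totalDegree_lt t hN, heatOp, heatPartialSum_apply]
  simp only [Module.End.pow_apply, hΔ]

theorem heatOp_add (t : ℝ) (p q : MvPolynomial (Fin d) ℝ) :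
    heatOp t (p + q) = heatOp t p + heatOp t q := by
  have hp : p.totalDegree < max p.totalDegree q.totalDegree + 1 := by omega
  have hq : q.totalDegree < max p.totalDegree q.totalDegree + 1 := by omega
  rw [heatOp_eq_heatPartialSum t ((totalDegree_add p q).trans_lt (Nat.lt_succ_self _)),
    heatOp_eq_heatPartialSum t hp, heatOp_eq_heatPartialSum t hq, map_add]

theorem heatOp_smul (t c : ℝ) (p : MvPolynomial (Fin d) ℝ) :
    heatOp t (c • p) = c • heatOp t p := by
  rw [heatOp_eq_heatPartialSum t ((totalDegree_smul_le c p).trans_lt (Nat.lt_succ_self _)),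
    heatOp_eq_heatPartialSum t (Nat.lt_succ_self _), map_smul]

theorem heatOp_one (t : ℝ) : heatOp t (1 : MvPolynomial (Fin d) ℝ) = 1 := by
  simp [heatOp]

theorem heatOp_X_mul (t : ℝ) (i : Fin d) (p : MvPolynomial (Fin d) ℝ) :
    heatOp t (X i * p) = X i * heatOp t p + t • heatOp t (pderiv i p) := by
  have hXp : (X i * p).totalDegree < p.totalDegree + 2 :=
    (totalDegree_mul _ _).trans_lt (by rw [totalDegree_X]; omega)
  have hdp : (pderiv i p).totalDegree < p.totalDegree + 1 :=
    (totalDegree_pderiv_le i p).trans_lt (by omega)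
  rw [heatOp_eq_heatPartialSum t hXp,
    heatOp_eq_heatPartialSum t (by omega : p.totalDegree < p.totalDegree + 2),
    heatOp_eq_heatPartialSum t hdp, heatPartialSum_succ_X_mul]

theorem eval_heatOp_monomial_add_single (t : ℝ) (x : Fin d → ℝ) (i : Fin d) (m : Fin d →₀ ℕ) :
    eval x (heatOp t (monomial (m + Finsupp.single i 1) 1)) =
      x i * eval x (heatOp t (monomial m 1)) +
        t * m i * eval x (heatOp t (monomial (m - Finsupp.single i 1) 1)) := by
  have hX : monomial (m + Finsupp.single i 1) (1 : ℝ) = X i * monomial m 1 := by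
    rw [X, monomial_mul, one_mul, add_comm]
  have hpderiv :
      pderiv i (monomial m (1 : ℝ)) = (m i : ℝ) • monomial (m - Finsupp.single i 1) 1 := by
    rw [pderiv_monomial, smul_monomial, smul_eq_mul, mul_one, one_mul]
  rw [hX, heatOp_X_mul, hpderiv, heatOp_smul]
  simp only [map_add, eval_mul, eval_X, smul_eq_C_mul, eval_C]
  ring

end heatOp

namespace ProbabilityTheory

variable {μ : ℝ} {v : ℝ≥0}

theorem integrable_gaussianReal_iff (hv : v ≠ 0) {f : ℝ → ℝ} :
    Integrable f (gaussianReal μ v) ↔ Integrable fun s => gaussianPDFReal μ v s * f s := by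
  rw [gaussianReal_of_var_ne_zero μ hv, integrable_withDensity_iff_integrable_smul'
    (measurable_gaussianPDF μ v) (ae_of_all _ fun _ => gaussianPDF_lt_top)]
  simp only [toReal_gaussianPDF, smul_eq_mul]

theorem hasDerivAt_gaussianPDFReal (s : ℝ) :
    HasDerivAt (gaussianPDFReal μ v) (-((s - μ) / v) * gaussianPDFReal μ v s) s := by
  have hexponent : HasDerivAt (fun y => -(y - μ) ^ 2 / (2 * v)) (-((s - μ) / v)) s := by
    have h : HasDerivAt (fun y => -(y - μ) ^ 2 / (2 * v)) (-(2 * (s - μ)) / (2 * v)) s := by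
      simpa using (((hasDerivAt_id s).sub_const μ).pow 2).neg.div_const (2 * (v : ℝ))
    exact h.congr_deriv (by ring)
  rw [gaussianPDFReal_def]
  exact (hexponent.exp.const_mul (√(2 * Real.pi * v))⁻¹).congr_deriv (by ring)

theorem integrable_pow_gaussianReal (n : ℕ) :
    Integrable (fun s => s ^ n) (gaussianReal μ v) := by
  refine ((memLp_id_gaussianReal n).integrable_norm_pow').mono' (by fun_prop)
    (ae_of_all _ fun s => ?_)
  simp

theorem _root_.Polynomial.integrable_eval_gaussianReal (q : Polynomial ℝ) :
    Integrable (fun s => q.eval s) (gaussianReal μ v) := by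
  induction q using Polynomial.induction_on' with
  | add p q hp hq =>
    simp only [Polynomial.eval_add]
    exact hp.add hq
  | monomial n a => simpa using (integrable_pow_gaussianReal n).const_mul a

theorem _root_.Polynomial.integral_sub_mul_eval_gaussianReal (q : Polynomial ℝ) :
    ∫ s, (s - μ) * q.eval s ∂gaussianReal μ v =
      v * ∫ s, q.derivative.eval s ∂gaussianReal μ v := by
  rcases eq_or_ne v 0 with rfl | hv
  · simp [gaussianReal_zero_var]
  have hv' : (v : ℝ) ≠ 0 := by exact_mod_cast hv
  have hpoly : ∀ r : Polynomial ℝ, Integrable fun s => r.eval s * gaussianPDFReal μ v s :=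
    fun r => ((integrable_gaussianReal_iff hv).1 r.integrable_eval_gaussianReal).congr
      (ae_of_all _ fun s => mul_comm _ _)
  have hibp : ∫ s, q.eval s * (-((s - μ) / v) * gaussianPDFReal μ v s) =
      -∫ s, q.derivative.eval s * gaussianPDFReal μ v s :=
    integral_mul_deriv_eq_deriv_mul_of_integrable (fun s _ => q.hasDerivAt s)
      (fun s _ => hasDerivAt_gaussianPDFReal s) ?_ ?_ ?_
  · rw [integral_gaussianReal_eq_integral_smul hv, integral_gaussianReal_eq_integral_smul hv]
    have hintegrand : ∀ s, q.eval s * (-((s - μ) / v) * gaussianPDFReal μ v s) =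
        -(v : ℝ)⁻¹ * (gaussianPDFReal μ v s • ((s - μ) * q.eval s)) := by
      intro s; rw [smul_eq_mul]; field_simp
    simp only [hintegrand, integral_const_mul, smul_eq_mul] at hibp
    simp only [smul_eq_mul, mul_comm (gaussianPDFReal μ v _) (q.derivative.eval _)]
    rwa [neg_mul, neg_inj, inv_mul_eq_iff_eq_mul₀ hv'] at hibp
  · refine ((hpoly (q * (Polynomial.X - Polynomial.C μ))).const_mul (-(v : ℝ)⁻¹)).congr
      (ae_of_all _ fun s => ?_)
    simp only [Polynomial.eval_mul, Polynomial.eval_sub, Polynomial.eval_X, Polynomial.eval_C,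
      Pi.mul_apply]
    field_simp
  · exact hpoly _
  · exact hpoly q

theorem integrable_add_pow_gaussianReal (a : ℝ) (n : ℕ) :
    Integrable (fun s => (a + s) ^ n) (gaussianReal μ v) := by
  convert ((Polynomial.C a + Polynomial.X) ^ n).integrable_eval_gaussianReal (μ := μ) (v := v)
  simp

theorem integral_add_pow_succ_gaussianReal (a : ℝ) (n : ℕ) :
    ∫ s, (a + s) ^ (n + 1) ∂gaussianReal 0 v =
      a * ∫ s, (a + s) ^ n ∂gaussianReal 0 v +
        v * n * ∫ s, (a + s) ^ (n - 1) ∂gaussianReal 0 v := by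
  have hstein := ((Polynomial.C a + Polynomial.X) ^ n).integral_sub_mul_eval_gaussianReal
    (μ := 0) (v := v)
  simp only [Polynomial.derivative_pow, Polynomial.derivative_add, Polynomial.derivative_C,
    Polynomial.derivative_X, zero_add, mul_one, Polynomial.eval_mul, Polynomial.eval_pow,
    Polynomial.eval_add, Polynomial.eval_X, Polynomial.eval_C, sub_zero,
    integral_const_mul] at hstein
  have hsplit : (fun s => (a + s) ^ (n + 1)) = fun s => a * (a + s) ^ n + s * (a + s) ^ n := by
    funext s; ring
  have hint : Integrable (fun s => s * (a + s) ^ n) (gaussianReal 0 v) := by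
    convert (Polynomial.X * (Polynomial.C a + Polynomial.X) ^ n).integrable_eval_gaussianReal
      (μ := 0) (v := v)
    simp
  rw [hsplit, integral_add ((integrable_add_pow_gaussianReal a n).const_mul a) hint,
    integral_const_mul, hstein, mul_assoc]

end ProbabilityTheory

open ProbabilityTheory

section pi

variable {ι : Type*} [Fintype ι]

theorem integral_eval_add_monomial_pi (ν : Measure ℝ) [SigmaFinite ν] (x : ι → ℝ)
    (m : ι →₀ ℕ) (a : ℝ) :
    ∫ y, eval (x + y) (monomial m a) ∂Measure.pi (fun _ => ν) =
      a * ∏ i, ∫ s, (x i + s) ^ m i ∂ν := by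
  simp only [eval_monomial, Finsupp.prod_fintype _ _ (fun _ => pow_zero _), Pi.add_apply]
  rw [integral_const_mul, integral_fintype_prod_eq_prod (fun i s => (x i + s) ^ m i)]

theorem integrable_eval_add_pi_gaussianReal (μ : ℝ) (v : ℝ≥0) (x : ι → ℝ)
    (p : MvPolynomial ι ℝ) :
    Integrable (fun y => eval (x + y) p) (Measure.pi fun _ => gaussianReal μ v) := by
  induction p using MvPolynomial.induction_on' with
  | monomial m a =>
    simp only [eval_monomial, Finsupp.prod_fintype _ _ (fun _ => pow_zero _), Pi.add_apply]
    exact (Integrable.fintype_prod fun i =>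
      integrable_add_pow_gaussianReal (x i) (m i)).const_mul a
  | add p q hp hq =>
    simp only [map_add]
    exact hp.add hq

theorem prod_integral_add_pow_add_single (v : ℝ≥0) (x : ι → ℝ) (i : ι) (m : ι →₀ ℕ) :
    ∏ j, ∫ s, (x j + s) ^ (m + Finsupp.single i 1 : ι →₀ ℕ) j ∂gaussianReal 0 v =
      x i * ∏ j, ∫ s, (x j + s) ^ m j ∂gaussianReal 0 v +
        v * m i *
          ∏ j, ∫ s, (x j + s) ^ (m - Finsupp.single i 1 : ι →₀ ℕ) j ∂gaussianReal 0 v := by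
  classical
  set M : ι → ℕ → ℝ := fun j n => ∫ s, (x j + s) ^ n ∂gaussianReal 0 v
  have hsplit : ∀ m' : ι →₀ ℕ, (∀ j ≠ i, m' j = m j) →
      ∏ j, M j (m' j) = M i (m' i) * ∏ j ∈ {i}ᶜ, M j (m j) := fun m' h => by
    rw [Fintype.prod_eq_mul_prod_compl i]
    exact congrArg _ (Finset.prod_congr rfl fun j hj => by rw [h j (by simpa using hj)])
  rw [hsplit (m + Finsupp.single i 1) fun j hj => by simp [hj.symm], hsplit m fun _ _ => rfl,
    hsplit (m - Finsupp.single i 1) fun j hj => by simp [hj.symm]]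
  simp only [M, Finsupp.add_apply, Finsupp.tsub_apply, Finsupp.single_eq_same,
    integral_add_pow_succ_gaussianReal]
  ring

end pi

theorem Finsupp.eq_of_add_single_one_recursion {ι α : Type*} {f g : (ι →₀ ℕ) → α}
    (F : ι → (ι →₀ ℕ) → α → α → α) (h0 : f 0 = g 0)
    (hf : ∀ i m, f (m + single i 1) = F i m (f m) (f (m - single i 1)))
    (hg : ∀ i m, g (m + single i 1) = F i m (g m) (g (m - single i 1))) : f = g := by
  funext m
  induction m using WellFoundedLT.induction with
  | _ m ih =>
  rcases eq_or_ne m 0 with rfl | hm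
  · exact h0
  obtain ⟨i, hi⟩ := Finsupp.ne_iff.1 hm
  rw [Finsupp.coe_zero, Pi.zero_apply] at hi
  have hle : single i 1 ≤ m := Finsupp.single_le_iff.2 (Nat.one_le_iff_ne_zero.2 hi)
  have hlt : m - single i 1 < m := lt_of_le_of_ne tsub_le_self fun h => by
    have := congrArg (· i) h
    simp only [Finsupp.tsub_apply, Finsupp.single_eq_same] at this
    omega
  rw [← tsub_add_cancel_of_le hle, hf, hg, ih _ hlt, ih _ (tsub_le_self.trans_lt hlt)]

theorem integral_eval_add_pi_gaussianReal {d : ℕ} (v : ℝ≥0) (x : Fin d → ℝ)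
    (p : MvPolynomial (Fin d) ℝ) :
    ∫ y, eval (x + y) p ∂Measure.pi (fun _ => gaussianReal 0 v) = eval x (heatOp v p) := by
  have hmonomial : (fun m => ∏ i, ∫ s, (x i + s) ^ m i ∂gaussianReal 0 v) =
      fun m => eval x (heatOp v (monomial m 1)) :=
    Finsupp.eq_of_add_single_one_recursion (fun i m a b => x i * a + v * m i * b)
      (by simp [heatOp_one]) (prod_integral_add_pow_add_single v x)
      (eval_heatOp_monomial_add_single v x)
  induction p using MvPolynomial.induction_on' with
  | monomial m a =>
    have hsmul : monomial m a = a • monomial m (1 : ℝ) := by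
      rw [smul_monomial, smul_eq_mul, mul_one]
    rw [integral_eval_add_monomial_pi, congrFun hmonomial m, hsmul, heatOp_smul, smul_eq_C_mul,
      eval_mul, eval_C]
  | add p q hp hq =>
    simp only [map_add]
    rw [integral_add (integrable_eval_add_pi_gaussianReal 0 v x p)
      (integrable_eval_add_pi_gaussianReal 0 v x q), hp, hq, heatOp_add, map_add]

/-- The algebraically defined heat operator agrees with Gaussian convolution on
polynomials: `∫ p(x+y) dγ_t^d(y) = (e^{tΔ/2} p)(x)`. -/
theorem heatOp_eq_gaussian_convolution
    (d : ℕ) (t : ℝ) (ht : 0 < t) (p : MvPolynomial (Fin d) ℝ) (x : Fin d → ℝ) :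
    ∫ y, MvPolynomial.eval (x + y) p ∂(gaussianPi d t) =
      MvPolynomial.eval x (heatOp t p) := by
  lift t to ℝ≥0 using ht.le
  simpa [gaussianPi] using integral_eval_add_pi_gaussianReal t x p
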